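/- arXiv:math/9804010 — 2 statements merged into one kernel-verified Lean document; each statement's English description precedes it below -/
import Mathlib

section
/- If T is an infinite subtree of a graph G such that every vertex of T has degree at least 3 in T, then the edge isoperimetric constant of T satisfies ι_E(T) ≥ 1. -/
open SimpleGraph Finset

/-- The number of edges of `T` with exactly one endpoint in `S`, counted as the number
of ordered pairs `(u, v)` with `u ∈ S`, `v ∉ S`, `u ~ v`. -/
noncomputable def edgeBoundaryCount {V : Type*} (T : SimpleGraph V) (S : Finset V) : ℕ :=
  Set.ncard {p : V × V | p.1 ∈ S ∧ p.2 ∉ S ∧ T.Adj p.1 p.2}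

section Aux

variable {V : Type*} {T : SimpleGraph V}

/-- In a tree, a vertex `u` has at most one neighbor `v` with `dist v r ≤ dist u r`. -/
lemma tree_subsingleton_nbrs (htree : T.IsTree) (u r : V) :
    {v : V | T.Adj u v ∧ T.dist v r ≤ T.dist u r}.Subsingleton := by
  classical
  rintro v ⟨hv, hvd⟩ w ⟨hw, hwd⟩
  by_contra hne
  -- build two distinct paths from u to r
  have key : ∀ v : V, T.Adj u v → T.dist v r ≤ T.dist u r →
      ∃ p : T.Walk u r, p.IsPath ∧ p.getVert 1 = v := by
    intro v hv hvd
    obtain ⟨p, hp, hpl⟩ := (htree.isConnected v r).exists_path_of_dist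
    have hus : u ∉ p.support := by
      intro hus
      have h1 : 1 ≤ (p.takeUntil u hus).length := by
        have hne' : v ≠ u := hv.ne'
        have : (p.takeUntil u hus).length ≠ 0 := by
          intro h0
          exact hne' ((SimpleGraph.Walk.eq_of_length_eq_zero h0))
        omega
      have h2 : T.dist u r ≤ (p.dropUntil u hus).length := SimpleGraph.dist_le _
      have h3 : (p.takeUntil u hus).length + (p.dropUntil u hus).length = p.length := by
        have := congrArg SimpleGraph.Walk.length (p.take_spec hus)
        rwa [SimpleGraph.Walk.length_append] at this
      omega
    refine ⟨SimpleGraph.Walk.cons hv p, ?_, ?_⟩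
    · exact hp.cons hus
    · simp [SimpleGraph.Walk.getVert_cons_succ]
  obtain ⟨p1, hp1, hg1⟩ := key v hv hvd
  obtain ⟨p2, hp2, hg2⟩ := key w hw hwd
  have := htree.IsAcyclic.path_unique ⟨p1, hp1⟩ ⟨p2, hp2⟩
  have : p1 = p2 := congrArg Subtype.val this
  exact hne (by rw [← hg1, ← hg2, this])

end Aux

/-- If `T` is an infinite locally finite tree in which every vertex has degree at least
`3`, then the edge isoperimetric constant of `T` is at least `1`. -/
theorem isoperimetric_constant_of_tree_min_degree_three {V : Type*} [Infinite V]
    (T : SimpleGraph V) (htree : T.IsTree)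
    (hlf : ∀ v : V, (T.neighborSet v).Finite)
    (hdeg : ∀ v : V, 3 ≤ (T.neighborSet v).ncard) :
    1 ≤ sInf {x : ℝ | ∃ S : Finset V, S.Nonempty ∧
        x = (edgeBoundaryCount T S : ℝ) / (S.card : ℝ)} := by
  classical
  letI : T.LocallyFinite := fun v => (hlf v).fintype
  -- notation
  set N : V → Finset V := fun v => T.neighborFinset v with hN
  have hdeg' : ∀ v, 3 ≤ (N v).card := by
    intro v
    have := hdeg v
    rwa [Set.ncard_eq_toFinset_card' ] at this
  -- internal ordered pairs count
  set I : Finset V → ℕ := fun S => ∑ v ∈ S, (N v ∩ S).card with hI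
  -- at most one internal neighbor for the farthest vertex
  have hmax : ∀ S : Finset V, S.Nonempty → ∃ u ∈ S, (N u ∩ S).card ≤ 1 := by
    intro S hS
    obtain ⟨r, hr⟩ := hS
    obtain ⟨u, hu, humax⟩ := S.exists_max_image (fun v => T.dist v r) ⟨r, hr⟩
    refine ⟨u, hu, ?_⟩
    rw [Finset.card_le_one]
    intro a ha b hb
    simp only [Finset.mem_inter, hN, SimpleGraph.mem_neighborFinset] at ha hb
    exact tree_subsingleton_nbrs htree u r ⟨ha.1, humax a ha.2⟩ ⟨hb.1, humax b hb.2⟩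
  -- I S ≤ 2 * (S.card - 1)
  have hIbound : ∀ n : ℕ, ∀ S : Finset V, S.card = n → I S + 2 ≤ 2 * S.card ∨ S = ∅ := by
    intro n
    induction n with
    | zero => intro S hS; right; exact Finset.card_eq_zero.mp hS
    | succ n ih =>
      intro S hS
      left
      obtain ⟨u, hu, hu1⟩ := hmax S (Finset.card_pos.mp (by omega))
      set S' := S.erase u with hS'
      have huS' : u ∉ S' := Finset.notMem_erase u S
      have hins : S = insert u S' := (Finset.insert_erase hu).symm
      have hcard' : S'.card = n := by
        rw [hS', Finset.card_erase_of_mem hu, hS]; omega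
      -- split the sum
      have hsplit : I S = (N u ∩ S).card + ∑ v ∈ S', (N v ∩ S).card := by
        rw [hI]
        simp only
        rw [hins, Finset.sum_insert huS']
      have hterm : ∀ v ∈ S', (N v ∩ S).card =
          (N v ∩ S').card + (if u ∈ N v then 1 else 0) := by
        intro v hv
        rw [hins]
        by_cases h : u ∈ N v
        · rw [Finset.inter_insert_of_mem h, Finset.card_insert_of_notMem
            (by simp [huS']), if_pos h]
        · rw [if_neg h, Nat.add_zero, Finset.inter_insert_of_notMem h]
      have hsum2 : ∑ v ∈ S', (N v ∩ S).card
          = I S' + ∑ v ∈ S', (if u ∈ N v then 1 else 0) := by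
        rw [Finset.sum_congr rfl hterm, Finset.sum_add_distrib]
      have hcount : ∑ v ∈ S', (if u ∈ N v then 1 else 0) = (N u ∩ S').card := by
        rw [← Finset.card_filter]
        congr 1
        ext w
        simp only [Finset.mem_filter, Finset.mem_inter, hN,
          SimpleGraph.mem_neighborFinset]
        rw [T.adj_comm]
        tauto
      have hu1' : (N u ∩ S').card ≤ 1 := by
        refine le_trans (Finset.card_le_card ?_) hu1
        exact Finset.inter_subset_inter le_rfl (Finset.erase_subset u S)
      have huNS : (N u ∩ S).card = (N u ∩ S').card := by
        rw [hins, Finset.inter_insert_of_notMem (by simp [hN])]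
      rcases ih S' hcard' with h | h
      · have : I S = I S' + 2 * (N u ∩ S').card := by
          rw [hsplit, hsum2, hcount, huNS]; ring
        omega
      · have hS'0 : I S' = 0 := by simp [hI, h]
        have : I S = 2 * (N u ∩ S').card := by
          rw [hsplit, hsum2, hcount, huNS, hS'0]; ring
        have hn0 : S.card = 1 := by rw [hS]; rw [h] at hcard'; simp at hcard'; omega
        rw [this, hn0]
        have hx : #(N u ∩ S') = 0 := by rw [h]; simp
        rw [hx]
  -- boundary count = sum of external neighbor counts
  have hBcount : ∀ S : Finset V,
      edgeBoundaryCount T S = ∑ u ∈ S, (N u \ S).card := by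
    intro S
    have hset : {p : V × V | p.1 ∈ S ∧ p.2 ∉ S ∧ T.Adj p.1 p.2} =
        ↑(S.biUnion (fun u => (N u \ S).image (fun v => (u, v)))) := by
      ext ⟨a, b⟩
      simp only [Set.mem_setOf_eq, Finset.coe_biUnion, Set.mem_iUnion, Finset.mem_coe,
        Finset.mem_image, Finset.mem_sdiff, hN, SimpleGraph.mem_neighborFinset]
      constructor
      · rintro ⟨h1, h2, h3⟩
        exact ⟨a, h1, b, ⟨h3, h2⟩, rfl⟩
      · rintro ⟨u, hu, v, ⟨hv1, hv2⟩, heq⟩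
        injection heq with h1 h2
        subst h1; subst h2
        exact ⟨hu, hv2, hv1⟩
    rw [edgeBoundaryCount, hset, Set.ncard_coe_finset]
    rw [Finset.card_biUnion]
    · refine Finset.sum_congr rfl fun u _ => ?_
      rw [Finset.card_image_of_injective _ (fun a b h => by injection h)]
    · intro x _ y _ hxy
      simp only [Finset.disjoint_left, Finset.mem_image]
      rintro ⟨a, b⟩ ⟨_, _, h1⟩ ⟨_, _, h2⟩
      injection h1 with h1' _
      injection h2 with h2' _
      exact hxy (h1' ▸ h2' ▸ rfl)
  -- main estimate: edgeBoundaryCount T S ≥ S.card for nonempty S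
  have hmain : ∀ S : Finset V, S.Nonempty → (S.card : ℕ) ≤ edgeBoundaryCount T S := by
    intro S hS
    have hdegsum : ∀ u ∈ S, (N u \ S).card + (N u ∩ S).card = (N u).card := by
      intro u _
      rw [Finset.card_sdiff_add_card_inter]
    have h1 : edgeBoundaryCount T S + I S = ∑ u ∈ S, (N u).card := by
      rw [hBcount, hI, ← Finset.sum_add_distrib]
      exact Finset.sum_congr rfl hdegsum
    have h2 : 3 * S.card ≤ ∑ u ∈ S, (N u).card := by
      calc 3 * S.card = ∑ _u ∈ S, 3 := by rw [Finset.sum_const, smul_eq_mul, mul_comm]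
      _ ≤ ∑ u ∈ S, (N u).card := Finset.sum_le_sum fun u _ => hdeg' u
    rcases hIbound S.card S rfl with h3 | h3
    · omega
    · exact absurd h3 (Finset.nonempty_iff_ne_empty.mp hS)
  -- conclude
  apply le_csInf
  · obtain ⟨v⟩ := (inferInstance : Nonempty V)
    exact ⟨(edgeBoundaryCount T {v} : ℝ) / 1, ⟨{v}, Finset.singleton_nonempty v, by simp⟩⟩
  · rintro x ⟨S, hS, rfl⟩
    have hpos : (0 : ℝ) < (S.card : ℝ) := by
      exact_mod_cast Finset.card_pos.mpr hS
    rw [le_div_iff₀ hpos, one_mul]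
    exact_mod_cast hmain S hS
end

section
/- Let T be a locally finite infinite tree with p_c(T) < 1 (i.e., Bernoulli bond percolation on T with some retention parameter p < 1 has an infinite cluster with positive probability). Then simple random walk on T is transient. -/
open MeasureTheory

/-- A (locally finite connected) graph is transient for simple random walk iff it admits
a unit flow of finite energy from some vertex to infinity (T. Lyons' criterion). -/
def IsTransient {V : Type*} (G : SimpleGraph V) : Prop :=
  ∃ o : V, ∃ θ : V → V → ℝ,
    (∀ x y, θ x y = -θ y x) ∧
    (∀ x y, ¬ G.Adj x y → θ x y = 0) ∧
    (∀ x, x ≠ o → ∑' y : V, θ x y = 0) ∧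
    (∑' y : V, θ o y = 1) ∧
    Summable (fun p : V × V => (θ p.1 p.2) ^ 2)

/-- The subgraph of `G` consisting of the retained (open) edges of the configuration
`ω`. -/
def percSubgraph {V : Type*} (G : SimpleGraph V) (ω : Sym2 V → Bool) : SimpleGraph V :=
  SimpleGraph.fromEdgeSet {e : Sym2 V | e ∈ G.edgeSet ∧ ω e = true}

/-- `μ` is the `p`-Bernoulli bond percolation measure on `G`: a probability measure on
configurations under which the states of the edges of `G` are independent, each edge
being retained with probability `p`. -/
def IsBernoulliPercolation {V : Type*} (G : SimpleGraph V) (p : ℝ)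
    (μ : Measure (Sym2 V → Bool)) : Prop :=
  IsProbabilityMeasure μ ∧
    ∀ (F : Finset (Sym2 V)), (∀ e ∈ F, e ∈ G.edgeSet) → ∀ f : Sym2 V → Bool,
      μ {ω | ∀ e ∈ F, ω e = f e}
        = ENNReal.ofReal (∏ e ∈ F, if f e then p else 1 - p)

/-!
Root the tree at a vertex `o` whose open cluster inside the subtree below `o` is infinite with
positive probability; such a root exists because a locally finite connected graph is countable.
On that event follow the canonical ray: from each vertex step to the least child, for a fixed
well-order of `V`, that is joined by an open edge and whose open subtree cluster is infinite.
The probabilities `m v` that the ray passes through `v` satisfy `m x = ∑_{y child of x} m y`, so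
`m / m o` is a unit flow from `o` to infinity. If the ray passes through `v`, the path from `o`
to `v` is open, so `m v ≤ p ^ |v|`; and the ray meets each level in at most one vertex, so
`∑_{|v| = n} m v ≤ 1`. Hence `∑ m v ^ 2 ≤ ∑ p ^ n = (1 - p)⁻¹`: the flow has finite energy.
-/

lemma Set.Finite.hasSum_indicator {α M : Type*} [AddCommMonoid M] [TopologicalSpace M]
    {s : Set α} (hs : s.Finite) (f : α → M) : HasSum (s.indicator f) (∑ a ∈ hs.toFinset, f a) := by
  rw [← Finset.sum_congr rfl fun a ha => Set.indicator_of_mem (hs.mem_toFinset.1 ha) f]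
  exact hasSum_sum_of_ne_finset_zero fun a ha => Set.indicator_of_notMem (by simpa using ha) f

lemma IsBernoulliPercolation.measure_forall_eq_true {V : Type*} {G : SimpleGraph V} {p : ℝ}
    {μ : Measure (Sym2 V → Bool)} (hB : IsBernoulliPercolation G p μ) {F : Finset (Sym2 V)}
    (hF : ∀ e ∈ F, e ∈ G.edgeSet) :
    μ {ω | ∀ e ∈ F, ω e = true} = ENNReal.ofReal (p ^ F.card) := by
  simpa using hB.2 F hF fun _ => true

lemma IsBernoulliPercolation.nonneg {V : Type*} {G : SimpleGraph V} {p : ℝ}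
    {μ : Measure (Sym2 V → Bool)} (hB : IsBernoulliPercolation G p μ) {e : Sym2 V}
    (he : e ∈ G.edgeSet) : 0 ≤ p := by
  have := hB.1
  have hclosed : μ {ω | ω e = false} = ENNReal.ofReal (1 - p) := by
    simpa using hB.2 {e} (by simpa using he) fun _ => false
  simpa [hclosed] using prob_le_one (μ := μ) (s := {ω | ω e = false})

lemma summable_sq_of_le_pow {ι : Type*} (d : ι → ℕ) {m : ι → ℝ} {p : ℝ} (hp0 : 0 ≤ p)
    (hp1 : p < 1) (hm0 : ∀ i, 0 ≤ m i) (hmp : ∀ i, m i ≤ p ^ d i)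
    (hlevel : ∀ n (Z : Finset ι), (∀ i ∈ Z, d i = n) → ∑ i ∈ Z, m i ≤ 1) :
    Summable fun i => m i ^ 2 := by
  classical
  refine summable_of_sum_le (c := (1 - p)⁻¹) (fun i => sq_nonneg (m i)) fun Z => ?_
  have hfiber (n : ℕ) : ∑ i ∈ Z with d i = n, m i ^ 2 ≤ p ^ n := calc
    ∑ i ∈ Z with d i = n, m i ^ 2 ≤ ∑ i ∈ Z with d i = n, p ^ n * m i :=
        Finset.sum_le_sum fun i hi => by
          rw [sq, ← (Finset.mem_filter.1 hi).2]
          exact mul_le_mul_of_nonneg_right (hmp i) (hm0 i)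
    _ = p ^ n * ∑ i ∈ Z with d i = n, m i := (Finset.mul_sum ..).symm
    _ ≤ p ^ n := mul_le_of_le_one_right (pow_nonneg hp0 n)
        (hlevel n _ fun i hi => (Finset.mem_filter.1 hi).2)
  calc ∑ i ∈ Z, m i ^ 2 = ∑ n ∈ Z.image d, ∑ i ∈ Z with d i = n, m i ^ 2 :=
        (Finset.sum_fiberwise_of_maps_to (fun i hi => Finset.mem_image_of_mem d hi) _).symm
    _ ≤ ∑ n ∈ Z.image d, p ^ n := Finset.sum_le_sum fun n _ => hfiber n
    _ ≤ ∑' n, p ^ n :=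
        Summable.sum_le_tsum _ (fun n _ => pow_nonneg hp0 n) (summable_geometric_of_lt_one hp0 hp1)
    _ = (1 - p)⁻¹ := tsum_geometric_of_lt_one hp0 hp1

namespace SimpleGraph.IsTree

section Rooted

variable {V : Type*} {T : SimpleGraph V} (hT : T.IsTree)

noncomputable def path (u v : V) : T.Walk u v :=
  (hT.existsUnique_path u v).choose

lemma isPath_path (u v : V) : (hT.path u v).IsPath :=
  (hT.existsUnique_path u v).choose_spec.1

lemma eq_path {u v : V} {q : T.Walk u v} (hq : q.IsPath) : q = hT.path u v :=
  (hT.existsUnique_path u v).choose_spec.2 q hq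

@[simp] lemma path_self (u : V) : hT.path u u = .nil :=
  (hT.eq_path .nil).symm

variable (o : V)

noncomputable def depth (v : V) : ℕ := (hT.path o v).length

def IsChild (x y : V) : Prop :=
  ∃ h : T.Adj x y, hT.path o y = (hT.path o x).concat h

noncomputable def parent (v : V) : V := (hT.path o v).penultimate

variable {hT o}

lemma eq_root_of_depth_eq_zero {v : V} (h : hT.depth o v = 0) : v = o :=
  (Walk.eq_of_length_eq_zero h).symm

lemma ne_root_of_depth_eq_succ {v : V} {n : ℕ} (h : hT.depth o v = n + 1) : v ≠ o := by
  rintro rfl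
  simp [depth] at h

lemma IsChild.adj {x y : V} (h : hT.IsChild o x y) : T.Adj x y := h.1

lemma IsChild.depth_eq {x y : V} (h : hT.IsChild o x y) :
    hT.depth o y = hT.depth o x + 1 := by
  obtain ⟨h, hp⟩ := h
  simp [depth, hp]

lemma IsChild.ne_root {x y : V} (h : hT.IsChild o x y) : y ≠ o := by
  rintro rfl
  have := h.depth_eq
  simp [depth] at this

lemma IsChild.parent_eq {x y : V} (h : hT.IsChild o x y) : hT.parent o y = x := by
  obtain ⟨h, hp⟩ := h
  rw [parent, hp, Walk.penultimate_concat]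

lemma isChild_parent {v : V} (hv : v ≠ o) : hT.IsChild o (hT.parent o v) v := by
  have hnil : ¬ (hT.path o v).Nil := Walk.not_nil_of_ne hv.symm
  refine ⟨Walk.adj_penultimate hnil, ?_⟩
  unfold parent
  rw [← hT.eq_path (hT.isPath_path o v).dropLast, Walk.concat_dropLast]

lemma depth_parent {v : V} (hv : v ≠ o) : hT.depth o (hT.parent o v) + 1 = hT.depth o v :=
  (isChild_parent hv).depth_eq.symm

variable (hT o) in
def IsDescendant (v u : V) : Prop := v ∈ (hT.path o u).support

lemma IsDescendant.path_eq_append {v u : V} (h : hT.IsDescendant o v u) :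
    hT.path o u = (hT.path o v).append (hT.path v u) := by
  classical
  rw [← hT.eq_path ((hT.isPath_path o u).takeUntil h),
    ← hT.eq_path ((hT.isPath_path o u).dropUntil h)]
  exact ((hT.path o u).take_spec h).symm

lemma IsChild.path_eq_cons {x y u : V} (hxy : hT.IsChild o x y)
    (hyu : hT.IsDescendant o y u) : hT.path x u = .cons hxy.adj (hT.path y u) := by
  have hu := hyu.path_eq_append
  rw [hxy.choose_spec, Walk.concat_append] at hu
  have hpath := hT.isPath_path o u
  rw [hu] at hpath
  exact (hT.eq_path hpath.of_append_right).symm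

lemma IsDescendant.exists_isChild {x u : V} (hxu : hT.IsDescendant o x u) (hne : u ≠ x) :
    ∃ y, hT.IsChild o x y ∧ hT.IsDescendant o y u := by
  have hu := hxu.path_eq_append
  cases hq : hT.path x u with
  | nil => exact absurd rfl hne
  | @cons _ y _ hadj r =>
    rw [hq, ← Walk.concat_append] at hu
    have hpath := hT.isPath_path o u
    rw [hu] at hpath
    refine ⟨y, ⟨hadj, (hT.eq_path hpath.of_append_left).symm⟩, ?_⟩
    rw [IsDescendant, hu]
    exact Walk.support_subset_support_append_left _ _ (Walk.end_mem_support _)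

lemma finite_setOf_depth_eq (hlf : ∀ v, (T.neighborSet v).Finite) (n : ℕ) :
    {v | hT.depth o v = n}.Finite := by
  induction n with
  | zero => exact (Set.finite_singleton o).subset fun v hv => eq_root_of_depth_eq_zero hv
  | succ n ih =>
    refine (ih.biUnion fun x _ => hlf x).subset fun v (hv : hT.depth o v = n + 1) => ?_
    have hvo := ne_root_of_depth_eq_succ hv
    exact Set.mem_biUnion (by simpa [← depth_parent hvo] using hv) (isChild_parent hvo).adj

end Rooted

lemma countable {V : Type*} {T : SimpleGraph V} (hT : T.IsTree)
    (hlf : ∀ v, (T.neighborSet v).Finite) : Countable V := by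
  obtain ⟨o⟩ := hT.connected.nonempty
  have huniv : (Set.univ : Set V) = ⋃ n, {v | hT.depth o v = n} := by ext; simp
  rw [← Set.countable_univ_iff, huniv]
  exact Set.countable_iUnion fun n => (hT.finite_setOf_depth_eq hlf n).countable

section Flow

variable {V : Type*} {T : SimpleGraph V} (hT : T.IsTree) (o : V)

lemma summable_sq_indicator_isChild {m : V → ℝ} (hsq : Summable fun v => m v ^ 2) :
    Summable fun q : V × V => ({y | hT.IsChild o q.1 y}.indicator m q.2) ^ 2 := by
  have hg : Function.Injective fun y => (hT.parent o y, y) := fun y y' h => congrArg Prod.snd h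
  refine (hg.summable_iff fun q hq => ?_).1 (hsq.of_nonneg_of_le (fun _ => sq_nonneg _) fun y => ?_)
  · rw [Set.indicator_of_notMem fun h => hq ⟨q.2, Prod.ext h.parent_eq rfl⟩, sq, zero_mul]
  · classical
    simp only [Function.comp_apply, Set.indicator_apply]
    split_ifs <;> simp [sq_nonneg]

lemma isTransient_of_hasSum_indicator_isChild {m : V → ℝ}
    (hm : ∀ x, HasSum ({y | hT.IsChild o x y}.indicator m) (m x)) (ho : m o ≠ 0)
    (hsq : Summable fun v => m v ^ 2) : IsTransient T := by
  set a : V → V → ℝ := fun x => {y | hT.IsChild o x y}.indicator m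
  have hchild (x : V) : HasSum (a x) (m x) := hm x
  have hnadj (x y : V) (hxy : ¬ T.Adj x y) : a x y = 0 :=
    Set.indicator_of_notMem (s := {y | hT.IsChild o x y}) (fun h => hxy h.adj) m
  have hparent (x : V) (hx : x ≠ o) : HasSum (fun y => a y x) (m x) := by
    convert hasSum_single (hT.parent o x) fun y hy =>
      Set.indicator_of_notMem (s := {z | hT.IsChild o y z}) (fun h => hy h.parent_eq.symm) m
      using 1
    exact (Set.indicator_of_mem (s := {z | hT.IsChild o (hT.parent o x) z})
      (isChild_parent hx) m).symm
  have hroot : HasSum (fun y => a y o) 0 := by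
    convert hasSum_zero with y
    exact Set.indicator_of_notMem (s := {z | hT.IsChild o y z}) (fun h => h.ne_root rfl) m
  have ha : Summable fun q : V × V => a q.1 q.2 ^ 2 := hT.summable_sq_indicator_isChild o hsq
  have ha' : Summable fun q : V × V => a q.2 q.1 ^ 2 :=
    (Equiv.prodComm V V).summable_iff.2 ha
  clear_value a
  refine ⟨o, fun x y => (a x y - a y x) / m o, fun x y => by ring, fun x y hxy => ?_,
    fun x hx => ?_, ?_, ?_⟩
  · simp only [hnadj x y hxy, hnadj y x fun h => hxy h.symm, sub_self, zero_div]
  · simpa using (((hchild x).sub (hparent x hx)).div_const (m o)).tsum_eq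
  · simpa [ho] using (((hchild o).sub hroot).div_const (m o)).tsum_eq
  · refine ((ha.add ha').mul_left (2 / m o ^ 2)).of_nonneg_of_le (fun _ => sq_nonneg _)
      fun q => ?_
    rw [div_pow, div_mul_eq_mul_div, div_le_div_iff_of_pos_right (by positivity)]
    nlinarith [sq_nonneg (a q.1 q.2 + a q.2 q.1)]

end Flow

section Ray

variable {V : Type*} {T : SimpleGraph V} (hT : T.IsTree) (o : V) (ω : Sym2 V → Bool)

def subtreeCluster (v : V) : Set V :=
  {u | hT.IsDescendant o v u ∧ ∀ e ∈ (hT.path v u).edges, ω e = true}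

def LeadsToInfinity (x y : V) : Prop :=
  hT.IsChild o x y ∧ ω s(x, y) = true ∧ (hT.subtreeCluster o ω y).Infinite

def IsRayStep (x y : V) : Prop :=
  hT.LeadsToInfinity o ω x y ∧ ∀ z, hT.LeadsToInfinity o ω x z → ¬ WellOrderingRel z y

def rayEvent (v : V) : Set (Sym2 V → Bool) :=
  {ω | (hT.subtreeCluster o ω o).Infinite ∧
    ∀ d ∈ (hT.path o v).darts, hT.IsRayStep o ω d.fst d.snd}

variable {hT o ω}

lemma subtreeCluster_subset_insert_biUnion (x : V) :
    hT.subtreeCluster o ω x ⊆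
      insert x (⋃ y ∈ {y | hT.IsChild o x y ∧ ω s(x, y) = true}, hT.subtreeCluster o ω y) := by
  rintro u ⟨hxu, hopen⟩
  by_cases hux : u = x
  · exact .inl hux
  obtain ⟨y, hxy, hyu⟩ := hxu.exists_isChild hux
  rw [hxy.path_eq_cons hyu, Walk.edges_cons, List.forall_mem_cons] at hopen
  exact .inr (Set.mem_biUnion ⟨hxy, hopen.1⟩ ⟨hyu, hopen.2⟩)

lemma exists_leadsToInfinity {x : V} (hfin : (T.neighborSet x).Finite)
    (hinf : (hT.subtreeCluster o ω x).Infinite) : ∃ y, hT.LeadsToInfinity o ω x y := by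
  by_contra! hcon
  refine hinf (Set.Finite.subset (.insert x (.biUnion (hfin.subset fun y hy => hy.1.adj)
    fun y hy => ?_)) (subtreeCluster_subset_insert_biUnion x))
  exact Set.not_infinite.mp fun h => hcon y ⟨hy.1, hy.2, h⟩

lemma exists_isRayStep {x : V} (hfin : (T.neighborSet x).Finite)
    (hinf : (hT.subtreeCluster o ω x).Infinite) : ∃ y, hT.IsRayStep o ω x y := by
  have hwf : WellFounded (WellOrderingRel (α := V)) := IsWellFounded.wf
  have hne : {y | hT.LeadsToInfinity o ω x y}.Nonempty := exists_leadsToInfinity hfin hinf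
  exact ⟨hwf.min _ hne, hwf.min_mem _ hne, fun z hz => hwf.not_lt_min _ hz⟩

lemma IsRayStep.unique {x y y' : V} (h : hT.IsRayStep o ω x y) (h' : hT.IsRayStep o ω x y') :
    y = y' := by
  rcases trichotomous_of (WellOrderingRel (α := V)) y y' with hlt | heq | hgt
  · exact absurd hlt (h'.2 y h.1)
  · exact heq
  · exact absurd hgt (h.2 y' h'.1)

variable (hT o) in
lemma rayEvent_root : hT.rayEvent o o = {ω | (hT.subtreeCluster o ω o).Infinite} := by
  simp [rayEvent]

lemma IsChild.rayEvent_eq {x y : V} (hxy : hT.IsChild o x y) :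
    hT.rayEvent o y = hT.rayEvent o x ∩ {ω | hT.IsRayStep o ω x y} := by
  ext ω
  simp [rayEvent, hxy.choose_spec, Walk.darts_concat, or_imp, forall_and, and_assoc]

lemma IsChild.rayEvent_subset {x y : V} (hxy : hT.IsChild o x y) :
    hT.rayEvent o y ⊆ hT.rayEvent o x := by
  rw [hxy.rayEvent_eq]
  exact Set.inter_subset_left

lemma subtreeCluster_infinite_of_mem_rayEvent {v : V} (hω : ω ∈ hT.rayEvent o v) :
    (hT.subtreeCluster o ω v).Infinite := by
  by_cases hv : v = o
  · exact hv ▸ hω.1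
  · rw [(isChild_parent hv).rayEvent_eq] at hω
    exact hω.2.1.2.2

lemma rayEvent_eq_biUnion {x : V} (hfin : (T.neighborSet x).Finite) :
    hT.rayEvent o x = ⋃ y ∈ {y | hT.IsChild o x y}, hT.rayEvent o y := by
  refine subset_antisymm (fun ω hω => ?_) (Set.iUnion₂_subset fun y hy => hy.rayEvent_subset)
  obtain ⟨y, hy⟩ := exists_isRayStep hfin (subtreeCluster_infinite_of_mem_rayEvent hω)
  exact Set.mem_biUnion hy.1.1 (hy.1.1.rayEvent_eq ▸ ⟨hω, hy⟩)

lemma eq_of_mem_rayEvent_of_depth_eq {v v' : V} (hv : ω ∈ hT.rayEvent o v)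
    (hv' : ω ∈ hT.rayEvent o v') (hd : hT.depth o v = hT.depth o v') : v = v' := by
  induction hn : hT.depth o v generalizing v v' with
  | zero => rw [eq_root_of_depth_eq_zero hn, eq_root_of_depth_eq_zero (hd.symm.trans hn)]
  | succ n ih =>
    have hvo := ne_root_of_depth_eq_succ hn
    have hv'o := ne_root_of_depth_eq_succ (hd.symm.trans hn)
    have hpv := depth_parent (hT := hT) hvo
    have hpv' := depth_parent (hT := hT) hv'o
    rw [(isChild_parent hvo).rayEvent_eq] at hv
    rw [(isChild_parent hv'o).rayEvent_eq] at hv'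
    have hpar : hT.parent o v = hT.parent o v' := ih hv.1 hv'.1 (by omega) (by omega)
    exact hv.2.unique (hpar ▸ hv'.2)

lemma disjoint_rayEvent {v v' : V} (hd : hT.depth o v = hT.depth o v') (hne : v ≠ v') :
    Disjoint (hT.rayEvent o v) (hT.rayEvent o v') :=
  Set.disjoint_left.2 fun _ hv hv' => hne (eq_of_mem_rayEvent_of_depth_eq hv hv' hd)

lemma forall_eq_true_of_mem_rayEvent {v : V} (hω : ω ∈ hT.rayEvent o v) :
    ∀ e ∈ (hT.path o v).edges, ω e = true := by
  intro e he
  obtain ⟨d, hd, rfl⟩ := List.mem_map.mp he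
  exact (hω.2 d hd).1.2.1

end Ray

section Measurability

variable {V : Type*} {T : SimpleGraph V} (hT : T.IsTree) (o : V) [Countable V]

lemma measurable_subtreeCluster (v : V) :
    Measurable fun ω : Sym2 V → Bool => hT.subtreeCluster o ω v := by
  refine measurable_set_iff.2 fun u => ?_
  unfold subtreeCluster
  fun_prop

@[fun_prop]
lemma measurable_subtreeCluster_infinite (v : V) :
    Measurable fun ω : Sym2 V → Bool => (hT.subtreeCluster o ω v).Infinite :=
  measurableSet_setOfPred.1 (measurable_subtreeCluster hT o v MeasurableSet.setOfPred_infinite)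

lemma measurableSet_rayEvent (v : V) : MeasurableSet (hT.rayEvent o v) := by
  have : Countable T.Dart := Dart.toProd_injective.countable
  unfold rayEvent IsRayStep LeadsToInfinity
  exact measurableSet_setOfPred.2 (by fun_prop)

end Measurability

section Percolation

variable {V : Type*} {T : SimpleGraph V} (hT : T.IsTree)

lemma setOf_reachable_percSubgraph_subset (ω : Sym2 V → Bool) (v : V) :
    {u | (percSubgraph T ω).Reachable v u} ⊆ hT.subtreeCluster v ω v := by
  intro u hu
  obtain ⟨q, hq⟩ := hu.exists_isPath
  have hopen : ∀ e ∈ q.edges, e ∈ T.edgeSet ∧ ω e = true := fun e he => by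
    have := q.edges_subset_edgeSet he
    simp only [percSubgraph, edgeSet_fromEdgeSet] at this
    exact this.1
  have hqT : ∀ e ∈ q.edges, e ∈ T.edgeSet := fun e he => (hopen e he).1
  refine ⟨Walk.start_mem_support _, fun e he => ?_⟩
  rw [← hT.eq_path (hq.transfer hqT), Walk.edges_transfer] at he
  exact (hopen e he).2

variable {o : V} {p : ℝ} {μ : Measure (Sym2 V → Bool)}

lemma exists_measure_subtreeCluster_infinite_ne_zero [Countable V]
    (h : μ {ω | ∃ v : V, {u : V | (percSubgraph T ω).Reachable v u}.Infinite} ≠ 0) :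
    ∃ o, μ {ω | (hT.subtreeCluster o ω o).Infinite} ≠ 0 := by
  by_contra! hnull
  refine h (measure_mono_null (fun ω ⟨v, hv⟩ => ?_) (measure_iUnion_null_iff.2 hnull))
  exact Set.mem_iUnion.2 ⟨v, hv.mono (hT.setOf_reachable_percSubgraph_subset ω v)⟩

lemma measure_rayEvent_le (hB : IsBernoulliPercolation T p μ) (v : V) :
    μ (hT.rayEvent o v) ≤ ENNReal.ofReal (p ^ hT.depth o v) := by
  classical
  have hcard : (hT.path o v).edges.toFinset.card = hT.depth o v := by
    rw [List.toFinset_card_of_nodup (hT.isPath_path o v).edges_nodup, Walk.length_edges, depth]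
  rw [← hcard, ← hB.measure_forall_eq_true fun e he =>
    Walk.edges_subset_edgeSet _ (List.mem_toFinset.1 he)]
  exact measure_mono fun ω hω e he => forall_eq_true_of_mem_rayEvent hω e (List.mem_toFinset.1 he)

variable [Countable V]

lemma sum_measure_rayEvent_le_one [IsProbabilityMeasure μ] {Z : Finset V} {n : ℕ}
    (hZ : ∀ z ∈ Z, hT.depth o z = n) : ∑ z ∈ Z, μ (hT.rayEvent o z) ≤ 1 := by
  rw [← measure_biUnion_finset (fun z hz z' hz' hne => disjoint_rayEvent
    ((hZ z hz).trans (hZ z' hz').symm) hne) fun z _ => hT.measurableSet_rayEvent o z]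
  exact prob_le_one

lemma hasSum_measure_rayEvent [IsFiniteMeasure μ] {x : V} (hfin : (T.neighborSet x).Finite) :
    HasSum ({y | hT.IsChild o x y}.indicator fun y => (μ (hT.rayEvent o y)).toReal)
      (μ (hT.rayEvent o x)).toReal := by
  have hC : {y | hT.IsChild o x y}.Finite := hfin.subset fun y hy => hy.adj
  have hdisj : (hC.toFinset : Set V).PairwiseDisjoint (hT.rayEvent o) :=
    fun y hy y' hy' hne => disjoint_rayEvent
      (((hC.mem_toFinset.1 hy).depth_eq).trans (hC.mem_toFinset.1 hy').depth_eq.symm) hne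
  have hunion : hT.rayEvent o x = ⋃ y ∈ hC.toFinset, hT.rayEvent o y := by
    rw [rayEvent_eq_biUnion hfin]
    simp
  rw [hunion, measure_biUnion_finset hdisj fun y _ => hT.measurableSet_rayEvent o y,
    ENNReal.toReal_sum fun y _ => measure_ne_top μ _]
  exact hC.hasSum_indicator _

end Percolation

end SimpleGraph.IsTree

/-- Let `T` be a locally finite infinite tree with `p_c(T) < 1`, i.e. for some retention
parameter `p < 1`, Bernoulli bond percolation on `T` produces an infinite cluster with
positive probability.  Then simple random walk on `T` is transient. -/
theorem transient_of_pc_lt_one {V : Type*} [Infinite V]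
    (T : SimpleGraph V) (htree : T.IsTree)
    (hlf : ∀ v : V, (T.neighborSet v).Finite)
    (hpc : ∃ p : ℝ, p < 1 ∧ ∃ μ : Measure (Sym2 V → Bool),
      IsBernoulliPercolation T p μ ∧
      0 < μ {ω | ∃ v : V, {u : V | (percSubgraph T ω).Reachable v u}.Infinite}) :
    IsTransient T := by
  obtain ⟨p, hp1, μ, hB, hpos⟩ := hpc
  have := hB.1
  have := htree.countable hlf
  obtain ⟨o, ho⟩ := htree.exists_measure_subtreeCluster_infinite_ne_zero hpos.ne'
  obtain ⟨v, hv⟩ := htree.connected.preconnected.exists_adj_of_nontrivial o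
  have hp0 : 0 ≤ p := hB.nonneg (T.mem_edgeSet.2 hv)
  set m : V → ℝ := fun v => (μ (htree.rayEvent o v)).toReal
  have hflow (x : V) : HasSum ({y | htree.IsChild o x y}.indicator m) (m x) :=
    htree.hasSum_measure_rayEvent (hlf x)
  have hroot : m o ≠ 0 :=
    ENNReal.toReal_ne_zero.2 ⟨by rwa [htree.rayEvent_root o], measure_ne_top μ _⟩
  have hdecay (v : V) : m v ≤ p ^ htree.depth o v :=
    ENNReal.toReal_le_of_le_ofReal (pow_nonneg hp0 _) (htree.measure_rayEvent_le hB v)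
  have hlevel (n : ℕ) (Z : Finset V) (hZ : ∀ z ∈ Z, htree.depth o z = n) : ∑ z ∈ Z, m z ≤ 1 := by
    rw [← ENNReal.toReal_sum fun z _ => measure_ne_top μ _]
    simpa using ENNReal.toReal_mono ENNReal.one_ne_top (htree.sum_measure_rayEvent_le_one hZ)
  exact htree.isTransient_of_hasSum_indicator_isChild o hflow hroot
    (summable_sq_of_le_pow (htree.depth o) hp0 hp1 (fun v => ENNReal.toReal_nonneg) hdecay hlevel)
end
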